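/- arXiv:2302.14006 — 2 statements merged into one kernel-verified Lean document; each statement's English description precedes it below -/
import Mathlib

section
/- Any regular multigraph of degree 4 admits a 2-coloring of its edges (colors 'left' and 'right') such that every vertex is incident to exactly two edges of each color. -/
/-- A multigraph: each edge has an ordered pair of endpoints (unordered in
spirit; adjacency and walks below are symmetrized). Parallel edges and loops
are allowed. -/
structure Multigraph (V E : Type*) where
  ends : E → V × V

namespace Multigraph

variable {V E : Type*}

/-- The number of incidences of edge `e` at vertex `v` (a loop counts twice). -/
def count [DecidableEq V] (G : Multigraph V E) (e : E) (v : V) : ℕ :=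
  (if (G.ends e).1 = v then 1 else 0) + (if (G.ends e).2 = v then 1 else 0)

/-- The degree of a vertex. -/
def degree [DecidableEq V] [Fintype E] (G : Multigraph V E) (v : V) : ℕ :=
  ∑ e, G.count e v



end Multigraph

/-!
Petersen's argument, with Hall's theorem in place of Euler tours. A `2k`-regular multigraph
has an orientation in which every vertex is the tail of `k` edges and the head of `k` edges.
Viewed as a bipartite multigraph between tails and heads this orientation is `k`-regular, so
Hall's theorem gives a perfect matching: one outgoing edge at each vertex, with all heads
distinct. These edges meet every vertex exactly twice (once as tail, once as head), and for
`k = 2` so do the remaining ones.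
-/

open Finset

theorem exists_saturating_matching {α β I : Type*} [Fintype I] [DecidableEq α] [DecidableEq β]
    (src : I → α) (dst : I → β) {k : ℕ} (hk : 0 < k)
    (hsrc : ∀ a, k ≤ #{i | src i = a}) (hdst : ∀ b, #{i | dst i = b} ≤ k) :
    ∃ m : α → I, Function.LeftInverse src m ∧ Function.Injective (dst ∘ m) := by
  set nbhd : α → Finset β := fun a => ({i | src i = a} : Finset I).image dst
  have hall : ∀ s : Finset α, #s ≤ #(s.biUnion nbhd) := by
    intro s
    set S : Finset I := {i | src i ∈ s}
    have hS_ge : k * #s ≤ #S :=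
      mul_card_image_le_card_of_maps_to (fun i hi => (mem_filter.mp hi).2) k fun a ha =>
        (hsrc a).trans_eq (by congr 1; ext i; simp +contextual [ha])
    have hS_le : #S ≤ k * #(s.biUnion nbhd) :=
      card_le_mul_card_image_of_maps_to
        (fun i hi => mem_biUnion.mpr ⟨src i, (mem_filter.mp hi).2, mem_image_of_mem dst (by simp)⟩)
        k fun b _ => (card_le_card (monotone_filter_left _ (subset_univ S))).trans (hdst b)
    exact Nat.le_of_mul_le_mul_left (hS_ge.trans hS_le) hk
  obtain ⟨f, hf_inj, hf_mem⟩ := (all_card_le_biUnion_card_iff_exists_injective nbhd).mp hall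
  have hpick : ∀ a, ∃ i, src i = a ∧ dst i = f a := fun a => by
    simpa [nbhd] using hf_mem a
  choose m hm_src hm_dst using hpick
  refine ⟨m, hm_src, fun a b hab => hf_inj ?_⟩
  simpa [hm_dst] using hab

namespace Multigraph

variable {V E : Type*} (G : Multigraph V E)

def endpoint (b : Bool) (e : E) : V :=
  if b then (G.ends e).1 else (G.ends e).2

def orient (o : E → Bool) : Multigraph V E where
  ends e := (G.endpoint (o e) e, G.endpoint (!o e) e)

section DecidableEq

variable [DecidableEq V]

theorem count_eq_sum_endpoint (e : E) (v : V) :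
    G.count e v = ∑ b : Bool, if G.endpoint b e = v then 1 else 0 := by
  simp [count, endpoint]

theorem sum_count [Fintype V] (e : E) : ∑ v, G.count e v = 2 := by
  simp_rw [count_eq_sum_endpoint]
  rw [sum_comm]
  simp

@[simp]
theorem count_orient (o : E → Bool) : (G.orient o).count = G.count := by
  ext e v
  cases h : o e <;> simp [count, orient, endpoint, h, add_comm]

variable [Fintype E]

def outDegree (v : V) : ℕ := #{e | (G.ends e).1 = v}

def inDegree (v : V) : ℕ := #{e | (G.ends e).2 = v}

theorem degree_eq_outDegree_add_inDegree (v : V) :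
    G.degree v = G.outDegree v + G.inDegree v := by
  rw [outDegree, inDegree, card_filter, card_filter, ← sum_add_distrib]
  rfl

theorem sum_degree [Fintype V] : ∑ v, G.degree v = 2 * Fintype.card E := by
  simp_rw [degree]
  rw [sum_comm]
  simp [sum_count, mul_comm]

theorem card_endpoint_eq_degree {k : ℕ} (v : V) (j : Fin k) :
    #{x : E × Bool × Fin k | (G.endpoint x.2.1 x.1, x.2.2) = (v, j)} = G.degree v := by
  rw [card_filter, Fintype.sum_prod_type, degree]
  refine sum_congr rfl fun e _ => ?_
  rw [Fintype.sum_prod_type, count_eq_sum_endpoint]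
  simp [ite_and]

variable [Fintype V]

/-- Hall's theorem assigns each edge a distinct slot among `k` slots at one of its endpoints; as
there are exactly as many slots as edges, every vertex receives exactly `k` outgoing edges. -/
theorem exists_orient_outDegree_eq {k : ℕ} (hk : 0 < k) (hreg : ∀ v, G.degree v = 2 * k) :
    ∃ o : E → Bool, ∀ v, (G.orient o).outDegree v = k := by
  classical
  obtain ⟨m, hm_src, hm_inj⟩ := exists_saturating_matching (k := 2 * k)
    (Prod.fst : E × Bool × Fin k → E) (fun x => (G.endpoint x.2.1 x.1, x.2.2)) (by omega)
    (fun e => by rw [card_filter, Fintype.sum_prod_type, sum_eq_single e] <;> simp +contextual)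
    (fun p => ((G.card_endpoint_eq_degree p.1 p.2).trans (hreg p.1)).le)
  set slot : E → V × Fin k := fun e => (G.endpoint (m e).2.1 e, (m e).2.2)
  have hslot_inj : Function.Injective slot := by
    convert hm_inj using 1
    funext e
    simp only [slot, Function.comp_apply, hm_src e]
  have hcard : Fintype.card E = Fintype.card (V × Fin k) := by
    have := G.sum_degree
    simp only [hreg, sum_const, card_univ, smul_eq_mul] at this
    simp only [Fintype.card_prod, Fintype.card_fin]
    linarith
  have hslot_bij : Function.Bijective slot :=
    (Fintype.bijective_iff_injective_and_card slot).mpr ⟨hslot_inj, hcard⟩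
  refine ⟨fun e => (m e).2.1, fun v => ?_⟩
  calc (G.orient _).outDegree v = ∑ e, if (slot e).1 = v then 1 else 0 := card_filter _ _
    _ = ∑ p : V × Fin k, if p.1 = v then 1 else 0 :=
      hslot_bij.sum_comp fun p => if p.1 = v then 1 else 0
    _ = k := by rw [Fintype.sum_prod_type, sum_eq_single v] <;> simp +contextual

theorem exists_two_factor {k : ℕ} (hk : 0 < k) (hreg : ∀ v, G.degree v = 2 * k) :
    ∃ c : E → Bool, ∀ v, (∑ e, if c e then G.count e v else 0) = 2 := by
  classical
  obtain ⟨o, hout⟩ := G.exists_orient_outDegree_eq hk hreg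
  set H := G.orient o
  have hin : ∀ v, H.inDegree v = k := fun v => by
    have hdeg : H.degree v = G.degree v := by simp only [degree, H, count_orient]
    have := H.degree_eq_outDegree_add_inDegree v
    rw [hdeg, hreg, hout] at this
    omega
  obtain ⟨m, hm_tail, hm_head⟩ := exists_saturating_matching (fun e => (H.ends e).1)
    (fun e => (H.ends e).2) hk (fun v => (hout v).ge) (fun v => (hin v).le)
  have hm_head_bij := Finite.injective_iff_bijective.mp hm_head
  refine ⟨fun e => decide (e ∈ Set.range m), fun v => ?_⟩
  calc (∑ e, if decide (e ∈ Set.range m) then G.count e v else 0)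
      = ∑ e ∈ univ.image m, H.count e v := by
        rw [← sum_filter, count_orient]
        congr 1
        ext e
        simp
    _ = ∑ u, H.count (m u) v := sum_image fun a _ b _ hab => hm_tail.injective hab
    _ = ∑ u, ((if u = v then 1 else 0) + if (H.ends (m u)).2 = v then 1 else 0) := by
        simp only [count, hm_tail _]
    _ = 2 := by
        have hhead : ∑ u, (if (H.ends (m u)).2 = v then 1 else 0) = 1 :=
          (hm_head_bij.sum_comp fun w => if w = v then 1 else 0).trans (by simp)
        rw [sum_add_distrib, hhead]
        simp

end DecidableEq

end Multigraph

/-- Any 4-regular multigraph admits a 2-coloring of its edges such that every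
vertex is incident to exactly two edges of each color. -/
theorem four_regular_balanced_two_coloring
    {V E : Type*} [Fintype V] [Fintype E] [DecidableEq V]
    (G : Multigraph V E) (hreg : ∀ v, G.degree v = 4) :
    ∃ c : E → Bool, ∀ v : V,
      (∑ e, if c e then G.count e v else 0) = 2 ∧
      (∑ e, if c e then 0 else G.count e v) = 2 := by
  obtain ⟨c, hc⟩ := G.exists_two_factor (k := 2) two_pos hreg
  refine ⟨c, fun v => ⟨hc v, ?_⟩⟩
  have hsplit : (∑ e, if c e then G.count e v else 0) + (∑ e, if c e then 0 else G.count e v) =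
      G.degree v := by
    rw [← sum_add_distrib]
    exact sum_congr rfl fun e _ => by cases c e <;> simp
  rw [hc v, hreg v] at hsplit
  omega
end

section
/- (Generalized von Neumann trace inequality, Fan) For square complex matrices A₁,…,A_m and unitary matrices U₁,…,U_m of the same size n, |Tr(A₁U₁A₂U₂···A_mU_m)| ≤ Σ_{i=1}^n σ_i(A₁)σ_i(A₂)···σ_i(A_m), where σ₁(A) ≥ σ₂(A) ≥ ··· are the singular values of A in decreasing order. -/
open Matrix ComplexOrder

/-- The singular values of a complex square matrix, as a function `Fin n → ℝ`
(in the order given by the eigenvalues of `AᴴA`, not yet sorted). -/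
noncomputable def singValues {n : ℕ} (A : Matrix (Fin n) (Fin n) ℂ) :
    Fin n → ℝ :=
  fun i => Real.sqrt ((Matrix.posSemidef_conjTranspose_mul_self A).1.eigenvalues i)

/-!
Write `A j = V j * D j * W j` with `V j`, `W j` contractions and `D j` the diagonal matrix of the
sorted singular values `σ j`; a genuine SVD is not needed, `V j = A j E (√Λ)⁺` with `E`
diagonalising `(A j)ᴴ A j` already works. As `σ j` is antitone and nonnegative,
`D j = ∑ k, c j k • P k` with `c j k ≥ 0`, where `P k` projects onto the coordinates `≤ k`.
Expanding the product multilinearly, the term indexed by `K : Fin m → Fin n` is a product of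
contractions containing every `P (K j)`; rotating the trace so that the projection of smallest
rank comes first bounds it by `#{i | ∀ j, i ≤ K j}`, and summing these bounds against the
coefficients `∏ j, c j (K j)` gives back `∑ i, ∏ j, σ j i`.
-/

open Finset
open scoped Matrix.Norms.L2Operator

namespace Matrix

variable {𝕜 : Type*} [RCLike 𝕜]

lemma norm_apply_le_l2_opNorm {m n : Type*} [Fintype m] [Fintype n] [DecidableEq n]
    (M : Matrix m n 𝕜) (i : m) (j : n) : ‖M i j‖ ≤ ‖M‖ := by
  have hcol : ‖WithLp.toLp 2 (M.col j)‖ ≤ ‖M‖ := by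
    simpa using M.l2_opNorm_mulVec (EuclideanSpace.single j 1)
  exact (PiLp.norm_apply_le (WithLp.toLp 2 (M.col j)) i).trans hcol

lemma trace_list_prod_eq_trace_getElem_mul {ι R : Type*} [Fintype ι] [DecidableEq ι]
    [CommSemiring R] (l : List (Matrix ι ι R)) {j : ℕ} (hj : j < l.length) :
    l.prod.trace = (l[j] * (l.drop (j + 1) ++ l.take j).prod).trace := by
  conv_lhs => rw [← List.take_append_drop j l, ← List.getElem_cons_drop hj]
  rw [List.prod_append, trace_mul_comm, List.prod_cons, List.prod_append, mul_assoc]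

variable {ι : Type*} [Fintype ι] [DecidableEq ι]

lemma l2_opNorm_one_le : ‖(1 : Matrix ι ι 𝕜)‖ ≤ 1 := by
  simpa using permMatrix_l2_opNorm_le (𝕜 := 𝕜) (1 : Equiv.Perm ι)

lemma l2_opNorm_mul_le_one {A B : Matrix ι ι 𝕜} (hA : ‖A‖ ≤ 1) (hB : ‖B‖ ≤ 1) :
    ‖A * B‖ ≤ 1 :=
  (l2_opNorm_mul A B).trans (mul_le_one₀ hA (norm_nonneg B) hB)

lemma l2_opNorm_le_one_of_mem_unitaryGroup {U : Matrix ι ι 𝕜} (hU : U ∈ unitaryGroup ι 𝕜) :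
    ‖U‖ ≤ 1 := by
  have h : ‖U‖ * ‖U‖ ≤ 1 := by
    rw [← l2_opNorm_conjTranspose_mul_self, ← star_eq_conjTranspose, mem_unitaryGroup_iff'.mp hU]
    exact l2_opNorm_one_le
  nlinarith [norm_nonneg U]

lemma l2_opNorm_list_prod_le_one {l : List (Matrix ι ι 𝕜)} (hl : ∀ M ∈ l, ‖M‖ ≤ 1) :
    ‖l.prod‖ ≤ 1 := by
  induction l with
  | nil => exact l2_opNorm_one_le
  | cons M l ih =>
    simp only [List.mem_cons, forall_eq_or_imp] at hl
    rw [List.prod_cons]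
    exact l2_opNorm_mul_le_one hl.1 (ih hl.2)

variable [LinearOrder ι]

variable (𝕜) in
def projIic (k : ι) : Matrix ι ι 𝕜 :=
  diagonal fun i => if i ≤ k then 1 else 0

lemma l2_opNorm_projIic_le_one (k : ι) : ‖projIic 𝕜 k‖ ≤ 1 := by
  rw [projIic, l2_opNorm_diagonal]
  refine pi_norm_le_iff_of_nonneg zero_le_one |>.mpr fun i => ?_
  split_ifs <;> simp

lemma norm_trace_projIic_mul_le (k : ι) (B : Matrix ι ι 𝕜) :
    ‖(projIic 𝕜 k * B).trace‖ ≤ #{i | i ≤ k} * ‖B‖ := by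
  have htrace : (projIic 𝕜 k * B).trace = ∑ i with i ≤ k, B i i := by
    simp [projIic, trace, sum_filter]
  calc ‖(projIic 𝕜 k * B).trace‖ ≤ ∑ i with i ≤ k, ‖B i i‖ := htrace ▸ norm_sum_le _ _
    _ ≤ ∑ i with i ≤ k, ‖B‖ := sum_le_sum fun i _ => norm_apply_le_l2_opNorm B i i
    _ = #{i | i ≤ k} * ‖B‖ := by rw [sum_const, nsmul_eq_mul]

lemma norm_trace_prod_projIic_le {m : ℕ} (V W : Fin m → Matrix ι ι 𝕜)
    (hV : ∀ j, ‖V j‖ ≤ 1) (hW : ∀ j, ‖W j‖ ≤ 1) (K : Fin m → ι) :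
    ‖(List.ofFn fun j => V j * projIic 𝕜 (K j) * W j).prod.trace‖ ≤ #{i | ∀ j, i ≤ K j} := by
  rcases m with _ | m
  · simp
  obtain ⟨j₀, hj₀⟩ := Finite.exists_min K
  set l := List.ofFn fun j => V j * projIic 𝕜 (K j) * W j
  have hl : ∀ M ∈ l, ‖M‖ ≤ 1 := by
    simp only [l, List.mem_ofFn, forall_exists_index, forall_apply_eq_imp_iff]
    exact fun j =>
      l2_opNorm_mul_le_one (l2_opNorm_mul_le_one (hV j) (l2_opNorm_projIic_le_one _)) (hW j)
  set R := (l.drop (j₀ + 1) ++ l.take j₀).prod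
  have hR : ‖W j₀ * R * V j₀‖ ≤ 1 := by
    refine l2_opNorm_mul_le_one (l2_opNorm_mul_le_one (hW j₀) ?_) (hV j₀)
    refine l2_opNorm_list_prod_le_one fun M hM => hl M ?_
    rcases List.mem_append.mp hM with h | h
    exacts [List.mem_of_mem_drop h, List.mem_of_mem_take h]
  have hrot : l.prod.trace = (projIic 𝕜 (K j₀) * (W j₀ * R * V j₀)).trace := by
    rw [trace_list_prod_eq_trace_getElem_mul l (j := j₀) (by simp [l, j₀.is_lt]),
      List.getElem_ofFn, Fin.eta, mul_assoc, mul_assoc, trace_mul_comm, mul_assoc]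
  have hcard : (univ.filter fun i => ∀ j, i ≤ K j) = univ.filter (· ≤ K j₀) := by
    ext i
    simp only [mem_filter, mem_univ, true_and]
    exact ⟨fun h => h j₀, fun h j => h.trans (hj₀ j)⟩
  calc ‖l.prod.trace‖ = ‖(projIic 𝕜 (K j₀) * (W j₀ * R * V j₀)).trace‖ := by rw [hrot]
    _ ≤ #{i | i ≤ K j₀} * ‖W j₀ * R * V j₀‖ := norm_trace_projIic_mul_le _ _
    _ ≤ #{i | ∀ j, i ≤ K j} := by
        rw [hcard]
        exact mul_le_of_le_one_right (Nat.cast_nonneg _) hR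

lemma diagonal_eq_sum_smul_projIic {d c : ι → ℝ} (hd : ∀ i, d i = ∑ k, if i ≤ k then c k else 0) :
    diagonal (fun i => (d i : 𝕜)) = ∑ k, c k • projIic 𝕜 k := by
  ext i i'
  rw [sum_apply]
  by_cases h : i = i'
  · subst h
    simp [projIic, hd i, apply_ite, Algebra.smul_def]
  · simp [projIic, h]

end Matrix

theorem Fin.exists_nonneg_layers_of_antitone {n : ℕ} {d : Fin n → ℝ} (hd : Antitone d)
    (hd0 : ∀ i, 0 ≤ d i) :
    ∃ c : Fin n → ℝ, (∀ k, 0 ≤ c k) ∧ ∀ i, d i = ∑ k, if i ≤ k then c k else 0 := by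
  induction n with
  | zero => exact ⟨0, fun _ => le_rfl, fun i => i.elim0⟩
  | succ n ih =>
    obtain ⟨c, hc0, hc⟩ := ih (d := fun i => d i.castSucc - d (last n))
      (fun a b hab => sub_le_sub_right (hd (castSucc_le_castSucc_iff.2 hab)) _)
      (fun i => sub_nonneg.2 (hd (le_last _)))
    refine ⟨snoc c (d (last n)), fun k => ?_, fun i => ?_⟩
    · cases k using lastCases <;> simp [hd0, hc0]
    · rw [sum_univ_castSucc]
      cases i using lastCases with
      | last => simp
      | cast i => simp [← hc i, (castSucc_lt_last i).le]

theorem List.prod_ofFn_sum_smul {R A κ : Type*} [CommSemiring R] [Semiring A] [Algebra R A]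
    [Fintype κ] {m : ℕ} (c : Fin m → κ → R) (M : Fin m → κ → A) :
    (List.ofFn fun j => ∑ k, c j k • M j k).prod
      = ∑ K : Fin m → κ, (∏ j, c j (K j)) • (List.ofFn fun j => M j (K j)).prod := by
  classical
  simpa [MultilinearMap.map_smul_univ] using
    (MultilinearMap.mkPiAlgebraFin R m A).map_sum fun j k => c j k • M j k

namespace Matrix

variable {𝕜 : Type*} [RCLike 𝕜]

theorem norm_trace_prod_diagonal_le {m n : ℕ} (d : Fin m → Fin n → ℝ)
    (hd : ∀ j, Antitone (d j)) (hd0 : ∀ j i, 0 ≤ d j i) (V W : Fin m → Matrix (Fin n) (Fin n) 𝕜)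
    (hV : ∀ j, ‖V j‖ ≤ 1) (hW : ∀ j, ‖W j‖ ≤ 1) :
    ‖(List.ofFn fun j => V j * diagonal (fun i => (d j i : 𝕜)) * W j).prod.trace‖
      ≤ ∑ i, ∏ j, d j i := by
  choose c hc0 hc using fun j => Fin.exists_nonneg_layers_of_antitone (hd j) (hd0 j)
  have hc0K : ∀ K : Fin m → Fin n, 0 ≤ ∏ j, c j (K j) := fun K =>
    prod_nonneg fun j _ => hc0 j (K j)
  have hexpand : (List.ofFn fun j => V j * diagonal (fun i => (d j i : 𝕜)) * W j).prod
      = ∑ K : Fin m → Fin n, (∏ j, c j (K j)) •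
          (List.ofFn fun j => V j * projIic 𝕜 (K j) * W j).prod := by
    simp only [diagonal_eq_sum_smul_projIic (hc _), mul_sum, sum_mul, mul_smul_comm,
      smul_mul_assoc]
    exact List.prod_ofFn_sum_smul c _
  have hcount : ∑ K : Fin m → Fin n, (∏ j, c j (K j)) * (#{i | ∀ j, i ≤ K j} : ℝ)
      = ∑ i, ∏ j, d j i := by
    simp only [hc, prod_univ_sum, Fintype.piFinset_univ, prod_ite_zero]
    rw [sum_comm]
    simp [sum_ite, mul_comm]
  calc _ = ‖∑ K : Fin m → Fin n, (∏ j, c j (K j)) •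
          (List.ofFn fun j => V j * projIic 𝕜 (K j) * W j).prod.trace‖ := by
        rw [hexpand, trace_sum]
        simp only [trace_smul]
    _ ≤ ∑ K : Fin m → Fin n, (∏ j, c j (K j)) *
          ‖(List.ofFn fun j => V j * projIic 𝕜 (K j) * W j).prod.trace‖ :=
        norm_sum_le_of_le _ fun K _ => by rw [norm_smul, Real.norm_of_nonneg (hc0K K)]
    _ ≤ ∑ K : Fin m → Fin n, (∏ j, c j (K j)) * (#{i | ∀ j, i ≤ K j} : ℝ) :=
        sum_le_sum fun K _ =>
          mul_le_mul_of_nonneg_left (norm_trace_prod_projIic_le V W hV hW K) (hc0K K)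
    _ = ∑ i, ∏ j, d j i := hcount

section Factorization

variable {m n : Type*} [Fintype m] [Fintype n] [DecidableEq n]

lemma conjTranspose_mul_self_mul_diagonal {X : Matrix m n 𝕜} {μ : n → ℝ}
    (hX : Xᴴ * X = diagonal fun i => (μ i : 𝕜)) (f : n → ℝ) :
    (X * diagonal fun i => (f i : 𝕜))ᴴ * (X * diagonal fun i => (f i : 𝕜))
      = diagonal fun i => ((f i ^ 2 * μ i : ℝ) : 𝕜) := by
  rw [conjTranspose_mul, diagonal_conjTranspose, Matrix.mul_assoc, ← Matrix.mul_assoc Xᴴ, hX,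
    diagonal_mul_diagonal, diagonal_mul_diagonal]
  congr 1
  ext i
  simp only [Pi.star_apply, RCLike.star_def, RCLike.conj_ofReal]
  push_cast
  ring

lemma l2_opNorm_mul_diagonal_le_one {X : Matrix m n 𝕜} {μ : n → ℝ}
    (hX : Xᴴ * X = diagonal fun i => (μ i : 𝕜)) {f : n → ℝ} (hf : ∀ i, |f i ^ 2 * μ i| ≤ 1) :
    ‖X * diagonal fun i => (f i : 𝕜)‖ ≤ 1 := by
  have h := l2_opNorm_conjTranspose_mul_self (X * diagonal fun i => (f i : 𝕜))
  rw [conjTranspose_mul_self_mul_diagonal hX, l2_opNorm_diagonal] at h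
  have hle : ‖fun i => ((f i ^ 2 * μ i : ℝ) : 𝕜)‖ ≤ 1 :=
    pi_norm_le_iff_of_nonneg zero_le_one |>.2 fun i => by simpa using hf i
  nlinarith [norm_nonneg (X * diagonal fun i => (f i : 𝕜))]

lemma mul_diagonal_eq_zero {X : Matrix m n 𝕜} {μ : n → ℝ}
    (hX : Xᴴ * X = diagonal fun i => (μ i : 𝕜)) {f : n → ℝ} (hf : ∀ i, f i ^ 2 * μ i = 0) :
    (X * diagonal fun i => (f i : 𝕜)) = 0 := by
  rw [← norm_eq_zero, ← mul_self_eq_zero, ← l2_opNorm_conjTranspose_mul_self,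
    conjTranspose_mul_self_mul_diagonal hX]
  simp [hf]

theorem exists_contraction_factorization_sqrt_eigenvalues (A : Matrix m n 𝕜) :
    ∃ (V : Matrix m n 𝕜) (W : Matrix n n 𝕜), ‖V‖ ≤ 1 ∧ ‖W‖ ≤ 1 ∧
      A = V * diagonal (fun i =>
        (√((posSemidef_conjTranspose_mul_self A).1.eigenvalues i) : 𝕜)) * W := by
  set hH := (posSemidef_conjTranspose_mul_self A).1
  set μ := hH.eigenvalues
  have hμ : ∀ i, 0 ≤ μ i := (posSemidef_conjTranspose_mul_self A).eigenvalues_nonneg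
  set E : Matrix n n 𝕜 := ↑hH.eigenvectorUnitary
  have hE : E * star E = 1 := Unitary.mul_star_self_of_mem hH.eigenvectorUnitary.2
  set X := A * E
  have hX : Xᴴ * X = diagonal fun i => (μ i : 𝕜) := by
    have := hH.conjStarAlgAut_star_eigenvectorUnitary
    rw [Unitary.conjStarAlgAut_star_apply] at this
    rw [conjTranspose_mul, ← star_eq_conjTranspose E, Matrix.mul_assoc, ← Matrix.mul_assoc Aᴴ,
      ← Matrix.mul_assoc]
    exact this
  -- the pseudo-inverse of `√μ`: Lean's `0⁻¹ = 0` is what is needed on the kernel of `X`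
  set t : n → ℝ := fun i => (√(μ i))⁻¹
  have hker : (X * diagonal fun i => ((1 - t i * √(μ i) : ℝ) : 𝕜)) = 0 := by
    refine mul_diagonal_eq_zero hX fun i => ?_
    rcases (hμ i).eq_or_lt with h | h
    · simp [← h]
    · simp [t, (Real.sqrt_pos.2 h).ne']
  have hXt : X * diagonal (fun i => (t i : 𝕜)) * diagonal (fun i => (√(μ i) : 𝕜)) = X := by
    rw [Matrix.mul_assoc, diagonal_mul_diagonal, ← add_zero (X * _), ← hker, ← Matrix.mul_add,
      diagonal_add]
    conv_rhs => rw [← Matrix.mul_one X, ← diagonal_one]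
    congr 2 with i
    push_cast
    ring
  refine ⟨X * diagonal fun i => (t i : 𝕜), star E, l2_opNorm_mul_diagonal_le_one hX fun i => ?_,
    l2_opNorm_le_one_of_mem_unitaryGroup (Unitary.star_mem hH.eigenvectorUnitary.2), ?_⟩
  · rcases (hμ i).eq_or_lt with h | h
    · simp [← h]
    · simp [t, inv_pow, Real.sq_sqrt (hμ i), h.ne']
  · rw [hXt, Matrix.mul_assoc, hE, Matrix.mul_one]

end Factorization

end Matrix

lemma exists_contraction_factorization_singValues {n : ℕ} (A : Matrix (Fin n) (Fin n) ℂ)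
    (e : Equiv.Perm (Fin n)) :
    ∃ V W : Matrix (Fin n) (Fin n) ℂ, ‖V‖ ≤ 1 ∧ ‖W‖ ≤ 1 ∧
      A = V * diagonal (fun i => (singValues A (e i) : ℂ)) * W := by
  obtain ⟨V, W, hV, hW, hA⟩ := exists_contraction_factorization_sqrt_eigenvalues A
  set P := e.permMatrix ℂ
  have hP : ‖P‖ ≤ 1 := permMatrix_l2_opNorm_le e
  have hPstar : ‖Pᴴ‖ ≤ 1 := by rw [l2_opNorm_conjTranspose]; exact hP
  have hdiag : diagonal (fun i => (singValues A i : ℂ))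
      = Pᴴ * diagonal (fun i => (singValues A (e i) : ℂ)) * P := by
    rw [conjTranspose_permMatrix, PEquiv.toMatrix_toPEquiv_mul, PEquiv.mul_toMatrix_toPEquiv,
      submatrix_submatrix]
    simp [Function.comp_def]
  refine ⟨V * Pᴴ, P * W, l2_opNorm_mul_le_one hV hPstar, l2_opNorm_mul_le_one hP hW, ?_⟩
  calc A = V * diagonal (fun i => (singValues A i : ℂ)) * W := hA
    _ = _ := by rw [hdiag]; simp only [Matrix.mul_assoc]

/-- Generalized von Neumann trace inequality (Ky Fan): for square matrices
`A₁,…,A_m` and unitaries `U₁,…,U_m`,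
`|Tr(A₁U₁A₂U₂⋯A_mU_m)| ≤ Σ_i σ_i(A₁)⋯σ_i(A_m)`, where for each `j`,
`σ j : Fin n → ℝ` is the decreasing rearrangement of the singular values of
`A j`. -/
theorem fan_trace_inequality {n m : ℕ}
    (A : Fin m → Matrix (Fin n) (Fin n) ℂ)
    (U : Fin m → Matrix.unitaryGroup (Fin n) ℂ)
    (σ : Fin m → Fin n → ℝ)
    (hsort : ∀ j, Antitone (σ j))
    (hperm : ∀ j, ∃ e : Equiv.Perm (Fin n), ∀ i, σ j i = singValues (A j) (e i)) :
    ‖(List.ofFn (fun j => A j * (U j : Matrix (Fin n) (Fin n) ℂ))).prod.trace‖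
      ≤ ∑ i : Fin n, ∏ j : Fin m, σ j i := by
  choose e he using hperm
  choose V W hV hW hA using fun j => exists_contraction_factorization_singValues (A j) (e j)
  simp only [← he] at hA
  have hσ : ∀ j i, 0 ≤ σ j i := fun j i => (he j i).symm ▸ Real.sqrt_nonneg _
  calc _ = ‖(List.ofFn fun j => V j * diagonal (fun i => (σ j i : ℂ)) *
          (W j * (U j : Matrix (Fin n) (Fin n) ℂ))).prod.trace‖ := by
        simp only [hA, Matrix.mul_assoc]
    _ ≤ _ := norm_trace_prod_diagonal_le σ hsort hσ V _ hV fun j =>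
        l2_opNorm_mul_le_one (hW j) (l2_opNorm_le_one_of_mem_unitaryGroup (U j).2)
end
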